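/- Let P be a probability measure on ℝ^p × ℝ^q with finite second moments whose covariance matrices Σ_X and Σ_Y are positive definite and whose Pillai trace satisfies Φ(P) = tr(Σ_X^{-1} Σ_XY Σ_Y^{-1} Σ_YX) > 0, and fix o = (x, y) ∈ ℝ^p × ℝ^q. With P_ε = (1−ε)P + ε δ_o and Ψ(Q) = √Φ(Q), the map ε ↦ Ψ(P_ε) is differentiable from the right at ε = 0 with right derivative equal to (2√Φ(P))^{-1} · [ −(x−μ_X)ᵀ Σ_X^{-1} Σ_XY Σ_Y^{-1} Σ_YX Σ_X^{-1} (x−μ_X) − (y−μ_Y)ᵀ Σ_Y^{-1} Σ_YX Σ_X^{-1} Σ_XY Σ_Y^{-1} (y−μ_Y) + 2 (y−μ_Y)ᵀ Σ_Y^{-1} Σ_YX Σ_X^{-1} (x−μ_X) ]. -/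

import Mathlib

open Matrix MeasureTheory

noncomputable section

/-- Squared Frobenius norm of a real matrix: `‖M‖_F² = tr (M Mᵀ)`. -/
def frobSq {m n : Type*} [Fintype m] [Fintype n] (M : Matrix m n ℝ) : ℝ :=
  Matrix.trace (M * Mᵀ)

/-- Frobenius norm of a real matrix. -/
def frobNorm {m n : Type*} [Fintype m] [Fintype n] (M : Matrix m n ℝ) : ℝ :=
  Real.sqrt (frobSq M)

open Classical in
/-- `A^{-1/2}`: the inverse of the unique positive definite square root of a positive
definite matrix `A` (junk value `0` if `A` is not positive definite). -/
def invSqrt {n : Type*} [Fintype n] [DecidableEq n] (A : Matrix n n ℝ) : Matrix n n ℝ :=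
  if h : A.PosDef then
    ((h.posSemidef.isHermitian.eigenvectorUnitary : Matrix n n ℝ) *
      diagonal ((↑) ∘ (Real.sqrt ∘ h.posSemidef.isHermitian.eigenvalues)) *
      (star h.posSemidef.isHermitian.eigenvectorUnitary : Matrix n n ℝ))⁻¹ else 0

variable {p q : ℕ}

/-- Mean vector `μ_X` of the first component under `P`. -/
def meanX (P : Measure ((Fin p → ℝ) × (Fin q → ℝ))) : Fin p → ℝ :=
  fun i => ∫ o, o.1 i ∂P

/-- Mean vector `μ_Y` of the second component under `P`. -/
def meanY (P : Measure ((Fin p → ℝ) × (Fin q → ℝ))) : Fin q → ℝ :=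
  fun j => ∫ o, o.2 j ∂P

/-- Covariance matrix `Σ_X` of the first component under `P`, defined entrywise. -/
def covX (P : Measure ((Fin p → ℝ) × (Fin q → ℝ))) : Matrix (Fin p) (Fin p) ℝ :=
  Matrix.of fun i i' => ∫ o, (o.1 i - meanX P i) * (o.1 i' - meanX P i') ∂P

/-- Covariance matrix `Σ_Y` of the second component under `P`, defined entrywise. -/
def covY (P : Measure ((Fin p → ℝ) × (Fin q → ℝ))) : Matrix (Fin q) (Fin q) ℝ :=
  Matrix.of fun j j' => ∫ o, (o.2 j - meanY P j) * (o.2 j' - meanY P j') ∂P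

/-- Cross-covariance matrix `Σ_XY` under `P`, defined entrywise. -/
def covXY (P : Measure ((Fin p → ℝ) × (Fin q → ℝ))) : Matrix (Fin p) (Fin q) ℝ :=
  Matrix.of fun i j => ∫ o, (o.1 i - meanX P i) * (o.2 j - meanY P j) ∂P

/-- The Pillai trace `Φ(P) = tr (Σ_X⁻¹ Σ_XY Σ_Y⁻¹ Σ_YX)` of `P`. -/
def pillai (P : Measure ((Fin p → ℝ) × (Fin q → ℝ))) : ℝ :=
  Matrix.trace ((covX P)⁻¹ * covXY P * (covY P)⁻¹ * (covXY P)ᵀ)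

/-- The Dirac contamination `P_ε = (1−ε) P + ε δ_o`. -/
def pert (P : Measure ((Fin p → ℝ) × (Fin q → ℝ))) (o : (Fin p → ℝ) × (Fin q → ℝ)) (ε : ℝ) :
    Measure ((Fin p → ℝ) × (Fin q → ℝ)) :=
  ENNReal.ofReal (1 - ε) • P + ENNReal.ofReal ε • Measure.dirac o

/-! Under the contamination `P_ε` every (cross-)covariance matrix becomes `(1 - ε)` times a
rank-one perturbation of itself, built from the centred point `u = x - μ_X`, `v = y - μ_Y`.
The Pillai trace is invariant under rescaling all three of its arguments by the same factor, so
near `ε = 0` the value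
`Φ(P_ε)` is the trace `tr ((Σ_X + ε u uᵀ)⁻¹ (Σ_XY + ε u vᵀ) (Σ_Y + ε v vᵀ)⁻¹ (Σ_XY + ε u vᵀ)ᵀ)`.
Differentiating with `d(A⁻¹) = -A⁻¹ dA A⁻¹` and collapsing the rank-one traces into quadratic forms
gives the gradient of `Φ`; the chain rule for `√` then gives that of `Ψ`. -/

open ProbabilityTheory

namespace Matrix

variable {l m n : Type*}

section Calculus

variable {t : ℝ}

theorem hasDerivAt_mul_apply [Fintype m] {M : ℝ → Matrix l m ℝ} {N : ℝ → Matrix m n ℝ}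
    {M' : Matrix l m ℝ} {N' : Matrix m n ℝ}
    (hM : ∀ i j, HasDerivAt (fun s => M s i j) (M' i j) t)
    (hN : ∀ i j, HasDerivAt (fun s => N s i j) (N' i j) t) (i : l) (k : n) :
    HasDerivAt (fun s => (M s * N s) i k) ((M' * N t + M t * N') i k) t := by
  simp only [mul_apply, add_apply, ← Finset.sum_add_distrib]
  exact HasDerivAt.fun_sum fun j _ => (hM i j).mul (hN j k)

theorem hasDerivAt_trace [Fintype n] {M : ℝ → Matrix n n ℝ} {M' : Matrix n n ℝ}
    (hM : ∀ i j, HasDerivAt (fun s => M s i j) (M' i j) t) :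
    HasDerivAt (fun s => (M s).trace) M'.trace t :=
  HasDerivAt.fun_sum fun i _ => hM i i

theorem hasDerivAt_inv_add_smul_apply [Fintype n] [DecidableEq n] {A : Matrix n n ℝ}
    (hA : IsUnit A) (D : Matrix n n ℝ) (i j : n) :
    HasDerivAt (fun t : ℝ => (A + t • D)⁻¹ i j) (-(A⁻¹ * D * A⁻¹) i j) 0 := by
  -- any algebra norm will do: it only serves to invoke the derivative of `Ring.inverse`
  let _ := Matrix.linftyOpNormedRing (n := n) (α := ℝ)
  let _ := Matrix.linftyOpNormedAlgebra (R := ℝ) (n := n) (α := ℝ)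
  have hline : HasDerivAt (fun t : ℝ => A + t • D) D 0 :=
    ((hasDerivAt_id (0 : ℝ)).smul_const D).const_add A |>.congr_deriv (one_smul _ _)
  have hinv := (hasFDerivAt_ringInverse (𝕜 := ℝ) hA.unit).comp_hasDerivAt_of_eq 0 hline
    (by simp)
  have hentry := ((ContinuousLinearMap.proj j).comp
    (ContinuousLinearMap.proj i : (n → n → ℝ) →L[ℝ] (n → ℝ))).hasFDerivAt.comp_hasDerivAt 0 hinv
  have hA' : (↑hA.unit⁻¹ : Matrix n n ℝ) = Ring.inverse A := by
    rw [← Ring.inverse_unit, IsUnit.unit_spec]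
  simp only [hA'] at hentry
  simp only [nonsing_inv_eq_ringInverse]
  exact hentry

end Calculus

theorem trace_mul_vecMulVec_mul {R : Type*} [CommRing R] [Fintype l] [Fintype m] [Fintype n]
    (M : Matrix l m R) (a : m → R) (b : n → R) (N : Matrix n l R) :
    trace (M * vecMulVec a b * N) = b ⬝ᵥ (N * M) *ᵥ a := by
  rw [trace_mul_cycle, mul_vecMulVec, trace_vecMulVec, dotProduct_comm]

theorem inv_smul_of_ne_zero {K : Type*} [Field K] [Fintype n] [DecidableEq n]
    (A : Matrix n n K) {c : K} (hc : c ≠ 0) : (c • A)⁻¹ = c⁻¹ • A⁻¹ := by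
  by_cases hA : IsUnit A.det
  · have := invertibleOfNonzero hc
    rw [inv_smul A c hA, invOf_eq_inv]
  · have hcA : ¬IsUnit (c • A).det := by
      simpa [det_smul, hc] using hA
    rw [nonsing_inv_apply_not_isUnit _ hA, nonsing_inv_apply_not_isUnit _ hcA, smul_zero]

section Pillai

variable [Fintype m] [Fintype n] [DecidableEq m] [DecidableEq n]

def pillaiTrace {K : Type*} [Field K] (A : Matrix m m K) (B : Matrix m n K)
    (C : Matrix n n K) : K :=
  trace (A⁻¹ * B * C⁻¹ * Bᵀ)

theorem pillaiTrace_smul {K : Type*} [Field K] (A : Matrix m m K) (B : Matrix m n K)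
    (C : Matrix n n K) {c : K} (hc : c ≠ 0) :
    pillaiTrace (c • A) (c • B) (c • C) = pillaiTrace A B C := by
  simp only [pillaiTrace, inv_smul_of_ne_zero _ hc, transpose_smul, Matrix.smul_mul,
    Matrix.mul_smul, smul_smul, trace_smul, smul_eq_mul]
  field_simp

theorem hasDerivAt_pillaiTrace_add_smul {A : Matrix m m ℝ} {C : Matrix n n ℝ} (hA : IsUnit A)
    (hC : IsUnit C) (B : Matrix m n ℝ) (D : Matrix m m ℝ) (E : Matrix m n ℝ)
    (F : Matrix n n ℝ) :
    HasDerivAt (fun t : ℝ => pillaiTrace (A + t • D) (B + t • E) (C + t • F))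
      (trace (-(A⁻¹ * D * A⁻¹) * B * C⁻¹ * Bᵀ) + trace (A⁻¹ * E * C⁻¹ * Bᵀ)
        + trace (A⁻¹ * B * -(C⁻¹ * F * C⁻¹) * Bᵀ) + trace (A⁻¹ * B * C⁻¹ * Eᵀ)) 0 := by
  have hB (i : m) (j : n) : HasDerivAt (fun t : ℝ => (B + t • E) i j) (E i j) 0 := by
    simpa using ((hasDerivAt_id (0 : ℝ)).mul_const (E i j)).const_add (B i j)
  have hBt (i : n) (j : m) : HasDerivAt (fun t : ℝ => (B + t • E)ᵀ i j) (Eᵀ i j) 0 := hB j i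
  refine (hasDerivAt_trace <| hasDerivAt_mul_apply
    (hasDerivAt_mul_apply
      (hasDerivAt_mul_apply (M' := -(A⁻¹ * D * A⁻¹)) (hasDerivAt_inv_add_smul_apply hA D) hB)
      (N' := -(C⁻¹ * F * C⁻¹)) (hasDerivAt_inv_add_smul_apply hC F))
    hBt).congr_deriv ?_
  simp only [zero_smul, add_zero, Matrix.add_mul, trace_add]

theorem hasDerivAt_pillaiTrace_add_smul_vecMulVec {A : Matrix m m ℝ} {C : Matrix n n ℝ}
    (hA : IsUnit A) (hC : IsUnit C) (hAs : A.IsSymm) (hCs : C.IsSymm) (B : Matrix m n ℝ)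
    (u : m → ℝ) (v : n → ℝ) :
    HasDerivAt
      (fun t : ℝ => pillaiTrace (A + t • vecMulVec u u) (B + t • vecMulVec u v)
        (C + t • vecMulVec v v))
      (-(u ⬝ᵥ (A⁻¹ * B * C⁻¹ * Bᵀ * A⁻¹) *ᵥ u) - v ⬝ᵥ (C⁻¹ * Bᵀ * A⁻¹ * B * C⁻¹) *ᵥ v
        + 2 * (v ⬝ᵥ (C⁻¹ * Bᵀ * A⁻¹) *ᵥ u)) 0 := by
  convert hasDerivAt_pillaiTrace_add_smul hA hC B _ _ _ using 1
  have hcross : trace (A⁻¹ * B * C⁻¹ * (vecMulVec u v)ᵀ) = v ⬝ᵥ (C⁻¹ * Bᵀ * A⁻¹) *ᵥ u := by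
    rw [transpose_vecMulVec, ← Matrix.mul_one (_ * vecMulVec v u), trace_mul_vecMulVec_mul,
      Matrix.one_mul, ← dotProduct_transpose_mulVec]
    simp only [transpose_mul, hAs.inv.eq, hCs.inv.eq, Matrix.mul_assoc]
  simp only [Matrix.neg_mul, Matrix.mul_neg, trace_neg, hcross]
  rw [show A⁻¹ * vecMulVec u u * A⁻¹ * B * C⁻¹ * Bᵀ
        = A⁻¹ * vecMulVec u u * (A⁻¹ * B * C⁻¹ * Bᵀ) by simp only [Matrix.mul_assoc],
    show A⁻¹ * vecMulVec u v * C⁻¹ * Bᵀ = A⁻¹ * vecMulVec u v * (C⁻¹ * Bᵀ) by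
      simp only [Matrix.mul_assoc],
    show A⁻¹ * B * (C⁻¹ * vecMulVec v v * C⁻¹) * Bᵀ
        = A⁻¹ * B * C⁻¹ * vecMulVec v v * (C⁻¹ * Bᵀ) by simp only [Matrix.mul_assoc]]
  simp only [trace_mul_vecMulVec_mul]
  simp only [Matrix.mul_assoc]
  ring

end Pillai

end Matrix

section Contamination

variable {Ω : Type*} [MeasurableSpace Ω] {P : Measure Ω} {ε : ℝ}

theorem integral_contamination [MeasurableSingletonClass Ω] {f : Ω → ℝ} (hf : Integrable f P)
    (o : Ω) (h0 : 0 ≤ ε) (h1 : ε ≤ 1) :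
    ∫ ω, f ω ∂(ENNReal.ofReal (1 - ε) • P + ENNReal.ofReal ε • Measure.dirac o)
      = (1 - ε) * ∫ ω, f ω ∂P + ε * f o := by
  rw [integral_add_measure (hf.smul_measure ENNReal.ofReal_ne_top)
      ((integrable_dirac enorm_lt_top).smul_measure ENNReal.ofReal_ne_top),
    integral_smul_measure, integral_smul_measure, integral_dirac,
    ENNReal.toReal_ofReal (by linarith), ENNReal.toReal_ofReal h0, smul_eq_mul, smul_eq_mul]

theorem integral_sub_mul_sub [IsProbabilityMeasure P] {X Y : Ω → ℝ} (hX : MemLp X 2 P)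
    (hY : MemLp Y 2 P) (c d : ℝ) :
    ∫ ω, (X ω - c) * (Y ω - d) ∂P = cov[X, Y; P] + (P[X] - c) * (P[Y] - d) := by
  have hXY : Integrable (fun ω => X ω * Y ω) P := hX.integrable_mul hY
  have hXd : Integrable (fun ω => d * X ω) P := (hX.integrable one_le_two).const_mul d
  have hYc : Integrable (fun ω => c * Y ω) P := (hY.integrable one_le_two).const_mul c
  have hXY_Xd : Integrable (fun ω => X ω * Y ω - d * X ω) P := hXY.sub hXd
  have hXY_Xd_Yc : Integrable (fun ω => X ω * Y ω - d * X ω - c * Y ω) P := hXY_Xd.sub hYc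
  calc ∫ ω, (X ω - c) * (Y ω - d) ∂P
      = ∫ ω, (X ω * Y ω - d * X ω - c * Y ω + c * d) ∂P := by
        congr with ω
        ring
    _ = ∫ ω, X ω * Y ω ∂P - d * P[X] - c * P[Y] + c * d := by
        rw [integral_add hXY_Xd_Yc (integrable_const _), integral_sub hXY_Xd hYc,
          integral_sub hXY hXd, integral_const_mul, integral_const_mul, integral_const]
        simp
    _ = cov[X, Y; P] + (P[X] - c) * (P[Y] - d) := by
        rw [covariance_eq_sub hX hY, Pi.mul_def]
        ring

theorem covariance_contamination [MeasurableSingletonClass Ω] [IsProbabilityMeasure P]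
    {X Y : Ω → ℝ} (hX : MemLp X 2 P) (hY : MemLp Y 2 P) (o : Ω) (h0 : 0 ≤ ε) (h1 : ε ≤ 1) :
    cov[X, Y; ENNReal.ofReal (1 - ε) • P + ENNReal.ofReal ε • Measure.dirac o]
      = (1 - ε) * (cov[X, Y; P] + ε * ((X o - P[X]) * (Y o - P[Y]))) := by
  have hmean {Z : Ω → ℝ} (hZ : MemLp Z 2 P) :
      ∫ ω, Z ω ∂(ENNReal.ofReal (1 - ε) • P + ENNReal.ofReal ε • Measure.dirac o)
        = (1 - ε) * P[Z] + ε * Z o :=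
    integral_contamination (hZ.integrable one_le_two) o h0 h1
  have hprod (c d : ℝ) : Integrable (fun ω => (X ω - c) * (Y ω - d)) P :=
    (hX.sub (memLp_const c)).integrable_mul (hY.sub (memLp_const d))
  rw [covariance, integral_contamination (hprod _ _) o h0 h1, integral_sub_mul_sub hX hY,
    hmean hX, hmean hY]
  ring

def crossCovariance {m n : Type*} (X : Ω → m → ℝ) (Y : Ω → n → ℝ)
    (μ : Measure Ω) : Matrix m n ℝ :=
  Matrix.of fun i j => cov[(X · i), (Y · j); μ]

theorem crossCovariance_contamination [MeasurableSingletonClass Ω] [IsProbabilityMeasure P]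
    {m n : Type*} [Fintype m] [Fintype n] {X : Ω → m → ℝ} {Y : Ω → n → ℝ}
    (hX : MemLp X 2 P) (hY : MemLp Y 2 P) (o : Ω) (h0 : 0 ≤ ε) (h1 : ε ≤ 1) :
    crossCovariance X Y (ENNReal.ofReal (1 - ε) • P + ENNReal.ofReal ε • Measure.dirac o)
      = (1 - ε) • (crossCovariance X Y P + ε • vecMulVec (fun i => X o i - P[(X · i)])
          (fun j => Y o j - P[(Y · j)])) := by
  ext i j
  exact covariance_contamination (hX.eval i) (hY.eval j) o h0 h1

end Contamination

theorem pillai_pert {P : Measure ((Fin p → ℝ) × (Fin q → ℝ))} [IsProbabilityMeasure P]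
    (hX2 : Integrable (fun o => ‖o.1‖ ^ 2) P) (hY2 : Integrable (fun o => ‖o.2‖ ^ 2) P)
    (o : (Fin p → ℝ) × (Fin q → ℝ)) {ε : ℝ} (h0 : 0 ≤ ε) (h1 : ε < 1) :
    pillai (pert P o ε)
      = pillaiTrace (covX P + ε • vecMulVec (o.1 - meanX P) (o.1 - meanX P))
          (covXY P + ε • vecMulVec (o.1 - meanX P) (o.2 - meanY P))
          (covY P + ε • vecMulVec (o.2 - meanY P) (o.2 - meanY P)) := by
  have hfst : MemLp Prod.fst 2 P :=
    (memLp_two_iff_integrable_sq_norm measurable_fst.aestronglyMeasurable).2 hX2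
  have hsnd : MemLp Prod.snd 2 P :=
    (memLp_two_iff_integrable_sq_norm measurable_snd.aestronglyMeasurable).2 hY2
  change pillaiTrace (crossCovariance Prod.fst Prod.fst (pert P o ε))
    (crossCovariance Prod.fst Prod.snd (pert P o ε))
    (crossCovariance Prod.snd Prod.snd (pert P o ε)) = _
  rw [pert, crossCovariance_contamination hfst hfst o h0 h1.le,
    crossCovariance_contamination hfst hsnd o h0 h1.le,
    crossCovariance_contamination hsnd hsnd o h0 h1.le,
    pillaiTrace_smul _ _ _ (sub_ne_zero.2 h1.ne')]
  rfl

/-- Canonical gradient of the root-Pillai trace `Ψ = √Φ` (equation (5) of the paper): if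
`Φ(P) > 0`, then under Dirac contamination `P_ε = (1−ε)P + εδ_o` the map `ε ↦ Ψ(P_ε)` has
right derivative at `ε = 0` equal to the canonical gradient of `Φ` divided by `2√Φ(P)`. -/
theorem root_pillai_canonical_gradient (p q : ℕ)
    (P : Measure ((Fin p → ℝ) × (Fin q → ℝ))) [IsProbabilityMeasure P]
    (hX2 : Integrable (fun o => ‖o.1‖ ^ 2) P) (hY2 : Integrable (fun o => ‖o.2‖ ^ 2) P)
    (hX : (covX P).PosDef) (hY : (covY P).PosDef)
    (hΦ : 0 < pillai P)
    (o : (Fin p → ℝ) × (Fin q → ℝ)) :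
    HasDerivWithinAt (fun ε => Real.sqrt (pillai (pert P o ε)))
      ((2 * Real.sqrt (pillai P))⁻¹ *
        (-((fun i => o.1 i - meanX P i) ⬝ᵥ
              (((covX P)⁻¹ * covXY P * (covY P)⁻¹ * (covXY P)ᵀ * (covX P)⁻¹).mulVec
                (fun i => o.1 i - meanX P i)))
          - ((fun j => o.2 j - meanY P j) ⬝ᵥ
              (((covY P)⁻¹ * (covXY P)ᵀ * (covX P)⁻¹ * covXY P * (covY P)⁻¹).mulVec
                (fun j => o.2 j - meanY P j)))
          + 2 * ((fun j => o.2 j - meanY P j) ⬝ᵥ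
              (((covY P)⁻¹ * (covXY P)ᵀ * (covX P)⁻¹).mulVec
                (fun i => o.1 i - meanX P i)))))
      (Set.Ici 0) 0 := by
  have hg := hasDerivAt_pillaiTrace_add_smul_vecMulVec hX.isUnit hY.isUnit
    (isHermitian_iff_isSymm.1 hX.isHermitian) (isHermitian_iff_isSymm.1 hY.isHermitian)
    (covXY P) (o.1 - meanX P) (o.2 - meanY P)
  have hg0 : pillaiTrace (covX P + (0 : ℝ) • vecMulVec (o.1 - meanX P) (o.1 - meanX P))
      (covXY P + (0 : ℝ) • vecMulVec (o.1 - meanX P) (o.2 - meanY P))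
      (covY P + (0 : ℝ) • vecMulVec (o.2 - meanY P) (o.2 - meanY P)) = pillai P := by
    simp only [zero_smul, add_zero]
    rfl
  have hroot := hg.sqrt (hg0 ▸ hΦ.ne')
  rw [hg0, div_eq_inv_mul] at hroot
  refine hroot.hasDerivWithinAt.congr_of_eventuallyEq ?_ ?_
  · filter_upwards [Ico_mem_nhdsGE one_pos] with ε hε
    rw [pillai_pert hX2 hY2 o hε.1 hε.2]
  · rw [pillai_pert hX2 hY2 o le_rfl one_pos]
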